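/- For all positive integers n and all natural numbers r, the alternating sum over k from 0 to n of (-1)^k * (2n+1 choose n-k) * k^r * (k+1)^r * (2k+1) is divisible by (2n+1) * (2n choose n) * n^min(2,2r). -/

import Mathlib

def cc : ℕ → ℕ → ℤ
  | 0, 0 => 1
  | 0, _+1 => 0
  | _+1, 0 => 0
  | r+1, j+1 => cc r j + ((j:ℤ)+1)*((j:ℤ)+2) * cc r (j+1)

lemma cc_eq_zero : ∀ r j, r < j → cc r j = 0
  | 0, _+1, _ => rfl
  | r+1, j+1, h => by
      have h1 : r < j := by omega
      have h2 : r < j+1 := by omega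
      simp [cc, cc_eq_zero r j h1, cc_eq_zero r (j+1) h2]

lemma L1 (j k : ℕ) :
    ((2*(j+1)).factorial * ((k+(j+1)).choose (2*(j+1))) : ℤ)
      = (2*j).factorial * ((k+j).choose (2*j)) * ((k:ℤ) - j) * ((k:ℤ) + j + 1) := by
  rcases lt_or_ge k j with h | h
  · rw [Nat.choose_eq_zero_of_lt (by omega), Nat.choose_eq_zero_of_lt (by omega)]
    push_cast; ring
  · obtain ⟨a, rfl⟩ : ∃ a, k = j + a := ⟨k - j, by omega⟩
    have h1 := Nat.choose_succ_right_eq (2*j+a+1) (2*j+1)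
    have h2 := Nat.choose_succ_right_eq (2*j+a+1) (2*j)
    have h3 := Nat.choose_mul_succ_eq (2*j+a) (2*j)
    rw [show 2*j+a+1 - (2*j+1) = a by omega] at h1
    rw [show 2*j+a+1 - 2*j = a+1 by omega] at h2
    rw [show 2*j+a+1 - 2*j = a+1 by omega] at h3
    have e1 : ((2*j+a+1).choose (2*j+1+1) * (2*j+1+1) : ℤ) = (2*j+a+1).choose (2*j+1) * a := by
      exact_mod_cast h1
    have e2 : ((2*j+a+1).choose (2*j+1) * (2*j+1) : ℤ) = (2*j+a+1).choose (2*j) * (a+1) := by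
      exact_mod_cast h2
    have e3 : ((2*j+a).choose (2*j) * (2*j+a+1) : ℤ) = (2*j+a+1).choose (2*j) * (a+1) := by
      exact_mod_cast h3
    have hf : ((2*(j+1)).factorial : ℤ) = (2*j).factorial * (2*j+1) * (2*j+2) := by
      rw [show 2*(j+1) = (2*j+1)+1 by ring, Nat.factorial_succ,
        show 2*j+1 = (2*j)+1 from rfl, Nat.factorial_succ]
      push_cast; ring
    rw [show j+a+(j+1) = 2*j+a+1 by ring, show j+a+j = 2*j+a by ring, hf,
      show 2*(j+1) = 2*j+1+1 by ring]
    push_cast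
    linear_combination ((2*j).factorial : ℤ)*(2*(j:ℤ)+1) * e1 + ((2*j).factorial : ℤ)*(a:ℤ) * e2
      - ((2*j).factorial : ℤ)*(a:ℤ) * e3

lemma Pexp (r : ℕ) : ∀ k : ℕ, ((k:ℤ)*((k:ℤ)+1))^r
    = ∑ j ∈ Finset.range (r+1), cc r j * (2*j).factorial * ((k+j).choose (2*j)) := by
  induction r with
  | zero => intro k; simp [cc]
  | succ r ih =>
    intro k
    rw [pow_succ, ih k]
    rw [Finset.sum_range_succ' (fun j => cc (r+1) j * (2*j).factorial * ((k+j).choose (2*j))) (r+1)]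
    have h0 : cc (r+1) 0 * ((2*0).factorial : ℤ) * ((k+0).choose (2*0)) = 0 := by simp [cc]
    rw [h0, add_zero]
    have key : ∑ j ∈ Finset.range (r+1), ((j:ℤ)*((j:ℤ)+1)) * (cc r j * (2*j).factorial * ((k+j).choose (2*j)))
        = ∑ i ∈ Finset.range (r+1), (((i:ℤ)+1)*((i:ℤ)+2)) * (cc r (i+1) * (2*(i+1)).factorial * ((k+(i+1)).choose (2*(i+1)))) := by
      rw [Finset.sum_range_succ' (fun j => ((j:ℤ)*((j:ℤ)+1)) * (cc r j * (2*j).factorial * ((k+j).choose (2*j)))) r]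
      rw [Finset.sum_range_succ]
      rw [cc_eq_zero r (r+1) (by omega)]
      push_cast
      simp only [zero_mul, mul_zero, add_zero]
      refine Finset.sum_congr rfl (fun i _ => by ring)
    calc (∑ j ∈ Finset.range (r+1), cc r j * ((2*j).factorial:ℤ) * ((k+j).choose (2*j))) * ((k:ℤ)*((k:ℤ)+1))
        = ∑ j ∈ Finset.range (r+1), (cc r j * (((2*(j+1)).factorial:ℤ) * ((k+(j+1)).choose (2*(j+1))))
            + ((j:ℤ)*((j:ℤ)+1)) * (cc r j * (2*j).factorial * ((k+j).choose (2*j)))) := by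
          rw [Finset.sum_mul]
          refine Finset.sum_congr rfl (fun j _ => ?_)
          rw [L1 j k]; ring
      _ = ∑ j ∈ Finset.range (r+1), cc r j * (((2*(j+1)).factorial:ℤ) * ((k+(j+1)).choose (2*(j+1))))
            + ∑ j ∈ Finset.range (r+1), ((j:ℤ)*((j:ℤ)+1)) * (cc r j * (2*j).factorial * ((k+j).choose (2*j))) := by
          rw [Finset.sum_add_distrib]
      _ = ∑ i ∈ Finset.range (r+1), cc (r+1) (i+1) * ((2*(i+1)).factorial:ℤ) * ((k+(i+1)).choose (2*(i+1))) := by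
          rw [key, ← Finset.sum_add_distrib]
          refine Finset.sum_congr rfl (fun i _ => ?_)
          show _ = cc (r+1) (i+1) * _ * _
          rw [show cc (r+1) (i+1) = cc r i + ((i:ℤ)+1)*((i:ℤ)+2) * cc r (i+1) from rfl]
          ring

lemma Bzero (n j : ℕ) (hjn : j < n) :
    ∑ k ∈ Finset.range (n+1),
      (-1:ℤ)^k * ((2*n+1).choose (n-k)) * (2*k+1) * ((k+j).choose (2*j)) = 0 := by
  set G : ℕ → ℤ := fun k =>
    (-1)^k * ((2*n+1).choose (n+1+k)) * ((k+j).choose (2*j)) * ((n:ℤ)+k+1) * ((j:ℤ) - k) with hG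
  have tel : ∀ k, k ≤ n → G (k+1) - G k
      = ((n:ℤ)-j) * ((-1:ℤ)^k * ((2*n+1).choose (n-k)) * (2*k+1) * ((k+j).choose (2*j))) := by
    intro k hk
    have hsym : ((2*n+1).choose (n-k)) = ((2*n+1).choose (n+1+k)) := by
      have := Nat.choose_symm (n := 2*n+1) (k := n+1+k) (by omega)
      rw [show 2*n+1 - (n+1+k) = n-k by omega] at this
      exact this
    rcases lt_or_ge (k+1) j with h | h
    · have z1 : ((k+j).choose (2*j)) = 0 := Nat.choose_eq_zero_of_lt (by omega)
      have z2 : ((k+1+j).choose (2*j)) = 0 := Nat.choose_eq_zero_of_lt (by omega)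
      simp [hG, z1, z2]
    · have a1 := Nat.choose_succ_right_eq (2*n+1) (n+k+1)
      rw [show 2*n+1 - (n+k+1) = n-k by omega] at a1
      have a2 := Nat.choose_mul_succ_eq (k+j) (2*j)
      rw [show k+j+1 - 2*j = k+1-j by omega] at a2
      have e1 : (((2*n+1).choose (n+k+1+1) : ℤ)) * ((n:ℤ)+k+1+1)
          = ((2*n+1).choose (n+k+1)) * ((n:ℤ)-k) := by
        have : (((2*n+1).choose (n+k+1+1) * (n+k+1+1) : ℕ) : ℤ)
            = (((2*n+1).choose (n+k+1) * (n-k) : ℕ) : ℤ) := by exact_mod_cast a1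
        push_cast [Nat.cast_sub hk] at this
        linarith [this]
      have e2 : (((k+j).choose (2*j) : ℤ)) * ((k:ℤ)+j+1)
          = ((k+j+1).choose (2*j)) * ((k:ℤ)+1-j) := by
        have : (((k+j).choose (2*j) * (k+j+1) : ℕ) : ℤ)
            = (((k+j+1).choose (2*j) * (k+1-j) : ℕ) : ℤ) := by exact_mod_cast a2
        push_cast [Nat.cast_sub h] at this
        linarith [this]
      rw [hG]
      simp only
      rw [hsym, show n+1+(k+1) = n+k+1+1 by ring, show n+1+k = n+k+1 by ring,
        show k+1+j = k+j+1 by ring]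
      push_cast
      linear_combination ((-1:ℤ))^(k+1) * (((k+j+1).choose (2*j)):ℤ) * ((j:ℤ)-k-1) * e1
        + (-(-1:ℤ)^k * (((2*n+1).choose (n+k+1)):ℤ) * ((n:ℤ)-k)) * e2
  have h1 : G (n+1) = 0 := by
    have : ((2*n+1).choose (n+1+(n+1))) = 0 := Nat.choose_eq_zero_of_lt (by omega)
    simp [hG, this]
  have h2 : G 0 = 0 := by
    rcases Nat.eq_zero_or_pos j with rfl | hj
    · simp [hG]
    · have : (j.choose (2*j)) = 0 := Nat.choose_eq_zero_of_lt (by omega)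
      simp [hG, this]
  have key : ((n:ℤ)-j) * (∑ k ∈ Finset.range (n+1),
      (-1:ℤ)^k * ((2*n+1).choose (n-k)) * (2*k+1) * ((k+j).choose (2*j))) = 0 := by
    rw [Finset.mul_sum]
    calc ∑ k ∈ Finset.range (n+1), ((n:ℤ)-j) * ((-1:ℤ)^k * ((2*n+1).choose (n-k)) * (2*k+1) * ((k+j).choose (2*j)))
        = ∑ k ∈ Finset.range (n+1), (G (k+1) - G k) := by
          refine Finset.sum_congr rfl (fun k hk => ?_)
          exact (tel k (by simpa using Nat.lt_succ_iff.mp (Finset.mem_range.mp hk))).symm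
      _ = G (n+1) - G 0 := Finset.sum_range_sub G (n+1)
      _ = 0 := by rw [h1, h2, sub_zero]
  have hne : ((n:ℤ)-j) ≠ 0 := by
    have : (j:ℤ) < n := by exact_mod_cast hjn
    linarith
  exact (mul_eq_zero.mp key).resolve_left hne

lemma Bdiag (n : ℕ) :
    ∑ k ∈ Finset.range (n+1),
      (-1:ℤ)^k * ((2*n+1).choose (n-k)) * (2*k+1) * ((k+n).choose (2*n))
    = (-1:ℤ)^n * (2*n+1) := by
  rw [Finset.sum_eq_single_of_mem n (Finset.self_mem_range_succ n)]
  · rw [Nat.sub_self, show n+n = 2*n by ring, Nat.choose_self, Nat.choose_zero_right]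
    push_cast; ring
  · intro k hk hkn
    have hklt : k < n := by
      have := Finset.mem_range.mp hk; omega
    have : ((k+n).choose (2*n)) = 0 := Nat.choose_eq_zero_of_lt (by omega)
    simp [this]


theorem stmt_8 (n r : ℕ) (hn : 0 < n) :
    ((2 * n + 1) * Nat.choose (2 * n) n * n ^ min 2 (2 * r) : ℤ) ∣
      ∑ k ∈ Finset.range (n + 1),
        (-1 : ℤ) ^ k * Nat.choose (2 * n + 1) (n - k) * k ^ r * (k + 1) ^ r * (2 * k + 1) := by
  have hS : ∑ k ∈ Finset.range (n + 1),
        (-1 : ℤ) ^ k * Nat.choose (2 * n + 1) (n - k) * (k:ℤ) ^ r * ((k:ℤ) + 1) ^ r * (2 * (k:ℤ) + 1)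
      = ∑ j ∈ Finset.range (r+1), cc r j * ((2*j).factorial : ℤ) *
          (∑ k ∈ Finset.range (n+1),
            (-1:ℤ)^k * ((2*n+1).choose (n-k)) * (2*k+1) * ((k+j).choose (2*j))) := by
    have step : ∀ k ∈ Finset.range (n+1),
        (-1 : ℤ) ^ k * Nat.choose (2 * n + 1) (n - k) * (k:ℤ) ^ r * ((k:ℤ) + 1) ^ r * (2 * (k:ℤ) + 1)
        = ∑ j ∈ Finset.range (r+1), cc r j * ((2*j).factorial : ℤ) *
            ((-1:ℤ)^k * ((2*n+1).choose (n-k)) * (2*k+1) * ((k+j).choose (2*j))) := by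
      intro k _
      have : (-1 : ℤ) ^ k * Nat.choose (2 * n + 1) (n - k) * (k:ℤ) ^ r * ((k:ℤ) + 1) ^ r * (2 * (k:ℤ) + 1)
          = (((k:ℤ)*((k:ℤ)+1))^r) * ((-1:ℤ)^k * ((2*n+1).choose (n-k)) * (2*(k:ℤ)+1)) := by
        rw [mul_pow]; ring
      rw [this, Pexp r k, Finset.sum_mul]
      refine Finset.sum_congr rfl (fun j _ => ?_)
      ring
    rw [Finset.sum_congr rfl step, Finset.sum_comm]
    refine Finset.sum_congr rfl (fun j _ => ?_)
    rw [Finset.mul_sum]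
  rw [hS]
  rcases lt_or_ge r n with hrn | hrn
  · have : ∀ j ∈ Finset.range (r+1), cc r j * ((2*j).factorial : ℤ) *
          (∑ k ∈ Finset.range (n+1),
            (-1:ℤ)^k * ((2*n+1).choose (n-k)) * (2*k+1) * ((k+j).choose (2*j))) = 0 := by
      intro j hj
      rw [Bzero n j (by have := Finset.mem_range.mp hj; omega), mul_zero]
    rw [Finset.sum_eq_zero this]
    exact dvd_zero _
  · rw [Finset.sum_eq_single_of_mem n (Finset.mem_range.mpr (by omega))]
    · rw [Bdiag n]
      -- goal: (2n+1)*C(2n,n)*n^min 2 (2r) ∣ cc r n * (2n)! * ((-1)^n * (2n+1))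
      have hmin : min 2 (2*r) = 2 := by omega
      rw [hmin]
      have hfac : ((2*n).factorial : ℤ) = ((2*n).choose n) * (n.factorial) * (n.factorial) := by
        have := Nat.choose_mul_factorial_mul_factorial (show n ≤ 2*n by omega)
        rw [show 2*n - n = n by omega] at this
        exact_mod_cast this.symm
      obtain ⟨c, hc⟩ : ((n:ℤ))^2 ∣ (n.factorial : ℤ) * (n.factorial : ℤ) := by
        have h1 : (n:ℤ) ∣ (n.factorial : ℤ) := Int.natCast_dvd_natCast.mpr (Nat.dvd_factorial hn le_rfl)
        have := mul_dvd_mul h1 h1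
        rwa [← pow_two] at this
      refine ⟨cc r n * (-1:ℤ)^n * c, ?_⟩
      rw [hfac] at *
      linear_combination (cc r n * (-1:ℤ)^n * (2*(n:ℤ)+1) * ((2*n).choose n)) * hc
    · intro j hj hjn
      rcases lt_or_ge j n with h | h
      · rw [Bzero n j h, mul_zero]
      · have hgt : n < j := by omega
        have : ∑ k ∈ Finset.range (n+1),
            (-1:ℤ)^k * ((2*n+1).choose (n-k)) * (2*k+1) * ((k+j).choose (2*j)) = 0 := by
          refine Finset.sum_eq_zero (fun k hk => ?_)
          have : ((k+j).choose (2*j)) = 0 := by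
            refine Nat.choose_eq_zero_of_lt (by have := Finset.mem_range.mp hk; omega)
          simp [this]
        rw [this, mul_zero]
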